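/- Let τ = (1+i√11)/2, and let T₁ = [[1,−1,−1+τ],[0,1,1],[0,0,1]], T_τ = [[1,−1+τ,−2+τ],[0,1,τ],[0,0,1]], T_v = [[1,0,1−2τ],[0,1,0],[0,0,1]], R = diag(1,−1,1), viewed as elements of GL(3,ℂ). Then every element γ of the subgroup of GL(3,ℂ) generated by {T₁, T_τ, T_v, R} can be written as γ = R^p · T_v^n · T₁^m · T_τ^l for some integers m, n, l and some p ∈ {0,1}. -/

import Mathlib

/-!
`T₁`, `T_τ`, `T_v` satisfy the relations of the discrete Heisenberg group: `T_v` commutes with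
`T₁` and `T_τ`, and `T₁ T_τ = T_τ T₁ T_v`. Pushing powers of `T_τ` past powers of `T₁` via
`T_τ^l T₁^m = T_v^(-lm) T₁^m T_τ^l` shows that the words `T_v^n T₁^m T_τ^l` already form a
subgroup `N`. The involution `R` fixes `T_v` and conjugates `T₁`, `T_τ` to `(T₁ T_v)⁻¹`,
`(T_τ T_v)⁻¹`, so it normalises `N`, and the generated group is `⟨R⟩ N = N ∪ R N`.
-/

open Matrix

noncomputable def τ : ℂ := (1 + Complex.I * (Real.sqrt 11 : ℂ)) / 2

theorem tau_sq : τ ^ 2 = τ - 3 := by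
  have h : (Real.sqrt 11 : ℂ) ^ 2 = 11 := by
    exact_mod_cast congrArg Complex.ofReal (Real.sq_sqrt (by norm_num : (0 : ℝ) ≤ 11))
  unfold τ
  linear_combination (Complex.I ^ 2 / 4) * h + (11 / 4) * Complex.I_sq

theorem SemiconjBy.inv_mul_swap {G : Type*} [Group G] {x y z : G} (h : SemiconjBy x y (z * y)) :
    SemiconjBy y x (z⁻¹ * x) := by
  rw [SemiconjBy, mul_assoc, h.eq, mul_assoc, inv_mul_cancel_left]

structure IsHeisenbergTriple {G : Type*} [Group G] (a b c : G) : Prop where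
  commute_left : Commute c a
  commute_right : Commute c b
  mul_eq_mul_mul : a * b = b * a * c

namespace IsHeisenbergTriple

variable {G : Type*} [Group G] {a b c : G}

theorem zpow_mul_zpow (h : IsHeisenbergTriple a b c) (l m : ℤ) :
    b ^ l * a ^ m = c ^ (-(l * m)) * a ^ m * b ^ l := by
  have hab : SemiconjBy a b (c * b) := by
    rw [SemiconjBy, h.mul_eq_mul_mul, ← (h.commute_right.mul_right h.commute_left).eq, mul_assoc]
  have habl : SemiconjBy a (b ^ l) (c ^ l * b ^ l) := by
    simpa only [h.commute_right.mul_zpow] using hab.zpow_right l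
  have hblam := habl.inv_mul_swap.zpow_right m
  rwa [(h.commute_left.zpow_left l).inv_left.mul_zpow, ← _root_.zpow_neg, ← _root_.zpow_mul,
    neg_mul] at hblam

theorem normalForm_mul (h : IsHeisenbergTriple a b c) (n m l n' m' l' : ℤ) :
    c ^ n * a ^ m * b ^ l * (c ^ n' * a ^ m' * b ^ l') =
      c ^ (n + n' - l * m') * a ^ (m + m') * b ^ (l + l') := by
  calc c ^ n * a ^ m * b ^ l * (c ^ n' * a ^ m' * b ^ l')
      = c ^ n * c ^ n' * a ^ m * (b ^ l * a ^ m') * b ^ l' := by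
        simp only [mul_assoc, (h.commute_right.zpow_zpow n' l).symm.left_comm,
          (h.commute_left.zpow_zpow n' m).symm.left_comm]
    _ = c ^ n * c ^ n' * a ^ m * c ^ (-(l * m')) * a ^ m' * b ^ l * b ^ l' := by
        simp only [h.zpow_mul_zpow, mul_assoc]
    _ = c ^ (n + n' - l * m') * a ^ (m + m') * b ^ (l + l') := by
        simp only [mul_assoc, (h.commute_left.zpow_zpow _ m).symm.left_comm]
        simp only [← mul_assoc, ← _root_.zpow_add, sub_eq_add_neg, add_assoc]

theorem normalForm_inv (h : IsHeisenbergTriple a b c) (n m l : ℤ) :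
    (c ^ n * a ^ m * b ^ l)⁻¹ = c ^ (-n - l * m) * a ^ (-m) * b ^ (-l) := by
  calc (c ^ n * a ^ m * b ^ l)⁻¹ = c ^ (-n) * (b ^ (-l) * a ^ (-m)) := by
        rw [_root_.mul_inv_rev, _root_.mul_inv_rev, ← _root_.zpow_neg, ← _root_.zpow_neg,
          ← _root_.zpow_neg, ← (h.commute_left.zpow_zpow (-n) (-m)).eq,
          (h.commute_right.zpow_zpow (-n) (-l)).symm.left_comm]
    _ = c ^ (-n - l * m) * a ^ (-m) * b ^ (-l) := by
        rw [h.zpow_mul_zpow, neg_mul_neg, ← mul_assoc, ← mul_assoc, ← _root_.zpow_add,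
          sub_eq_add_neg]

def subgroup (h : IsHeisenbergTriple a b c) : Subgroup G where
  carrier := {g | ∃ n m l : ℤ, g = c ^ n * a ^ m * b ^ l}
  one_mem' := ⟨0, 0, 0, by simp⟩
  mul_mem' := by
    rintro _ _ ⟨n, m, l, rfl⟩ ⟨n', m', l', rfl⟩
    exact ⟨_, _, _, h.normalForm_mul n m l n' m' l'⟩
  inv_mem' := by
    rintro _ ⟨n, m, l, rfl⟩
    exact ⟨_, _, _, h.normalForm_inv n m l⟩

theorem left_mem_subgroup (h : IsHeisenbergTriple a b c) : a ∈ h.subgroup := ⟨0, 1, 0, by simp⟩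

theorem right_mem_subgroup (h : IsHeisenbergTriple a b c) : b ∈ h.subgroup := ⟨0, 0, 1, by simp⟩

theorem center_mem_subgroup (h : IsHeisenbergTriple a b c) : c ∈ h.subgroup :=
  ⟨1, 0, 0, by simp⟩

theorem mem_normalizer_subgroup (h : IsHeisenbergTriple a b c) {r : G} (hr : r * r = 1)
    (ha : r * a * r ∈ h.subgroup) (hb : r * b * r ∈ h.subgroup) (hc : r * c * r ∈ h.subgroup) :
    r ∈ Subgroup.normalizer (h.subgroup : Set G) := by
  have hr' : r⁻¹ = r := inv_eq_of_mul_eq_one_right hr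
  have hconj : ∀ g ∈ h.subgroup, r * g * r ∈ h.subgroup := by
    have key : ∀ x, r * x * r = MulAut.conj r x := by simp [hr']
    rintro _ ⟨n, m, l, rfl⟩
    simp only [key, map_mul, map_zpow] at ha hb hc ⊢
    exact mul_mem (mul_mem (zpow_mem hc n) (zpow_mem ha m)) (zpow_mem hb l)
  rw [Subgroup.mem_normalizer_iff, hr']
  refine fun g ↦ ⟨hconj g, fun hg ↦ ?_⟩
  simpa [← mul_assoc, hr, mul_assoc _ r r] using hconj _ hg

theorem exists_normalForm_of_mem_closure (h : IsHeisenbergTriple a b c) {r : G}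
    (hr : r * r = 1) (ha : r * a * r ∈ h.subgroup) (hb : r * b * r ∈ h.subgroup)
    (hc : r * c * r ∈ h.subgroup) {g : G} (hg : g ∈ Subgroup.closure {a, b, c, r}) :
    ∃ (m n l : ℤ) (p : ℕ), p ≤ 1 ∧ g = r ^ p * c ^ n * a ^ m * b ^ l := by
  have hle : Subgroup.closure {a, b, c, r} ≤ Subgroup.zpowers r ⊔ h.subgroup := by
    simp only [Subgroup.closure_le, Set.insert_subset_iff, Set.singleton_subset_iff]
    exact ⟨Subgroup.mem_sup_right h.left_mem_subgroup, Subgroup.mem_sup_right h.right_mem_subgroup,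
      Subgroup.mem_sup_right h.center_mem_subgroup, Subgroup.mem_sup_left (Subgroup.mem_zpowers r)⟩
  obtain ⟨_, ⟨k, rfl⟩, _, ⟨n, m, l, rfl⟩, rfl⟩ :=
    (Subgroup.coe_mul_of_left_le_normalizer_right _ _
      (Subgroup.zpowers_le.mpr (h.mem_normalizer_subgroup hr ha hb hc))).subset (hle hg)
  refine ⟨m, n, l, (k % 2).toNat, by omega, ?_⟩
  have hk : ((k % 2).toNat : ℤ) = k % 2 := Int.toNat_of_nonneg (Int.emod_nonneg k two_ne_zero)
  rw [← zpow_natCast, hk, ← zpow_eq_zpow_emod k (by rwa [_root_.zpow_two]), mul_assoc, mul_assoc,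
    mul_assoc]

end IsHeisenbergTriple

theorem normal_form_cusp_stabilizer_d11
    (T₁ Tτ Tv R : GL (Fin 3) ℂ)
    (hT₁ : (T₁ : Matrix (Fin 3) (Fin 3) ℂ) = !![1, -1, -1 + τ; 0, 1, 1; 0, 0, 1])
    (hTτ : (Tτ : Matrix (Fin 3) (Fin 3) ℂ) = !![1, -1 + τ, -2 + τ; 0, 1, τ; 0, 0, 1])
    (hTv : (Tv : Matrix (Fin 3) (Fin 3) ℂ) = !![1, 0, 1 - 2 * τ; 0, 1, 0; 0, 0, 1])
    (hR : (R : Matrix (Fin 3) (Fin 3) ℂ) = !![1, 0, 0; 0, -1, 0; 0, 0, 1])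
    (γ : GL (Fin 3) ℂ) (hγ : γ ∈ Subgroup.closure {T₁, Tτ, Tv, R}) :
    ∃ (m n l : ℤ) (p : ℕ), p ≤ 1 ∧ γ = R ^ p * Tv ^ n * T₁ ^ m * Tτ ^ l := by
  obtain ⟨hTvT₁, hTvTτ, hT₁Tτ, hRR, hRT₁, hRTτ, hRTv⟩ :
      Tv * T₁ = T₁ * Tv ∧ Tv * Tτ = Tτ * Tv ∧ T₁ * Tτ = Tτ * T₁ * Tv ∧ R * R = 1 ∧
      T₁ * Tv * (R * T₁ * R) = 1 ∧ Tτ * Tv * (R * Tτ * R) = 1 ∧ R * Tv * R = Tv := by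
    simp only [Units.ext_iff, Units.val_mul, Units.val_one, hT₁, hTτ, hTv, hR, mul_fin_three,
      one_fin_three, EmbeddingLike.apply_eq_iff_eq, vecCons_inj, and_true]
    grind [tau_sq]
  have hH : IsHeisenbergTriple T₁ Tτ Tv := ⟨hTvT₁, hTvTτ, hT₁Tτ⟩
  refine hH.exists_normalForm_of_mem_closure hRR ?_ ?_ ?_ hγ
  · rw [eq_inv_of_mul_eq_one_right hRT₁]
    exact inv_mem (mul_mem hH.left_mem_subgroup hH.center_mem_subgroup)
  · rw [eq_inv_of_mul_eq_one_right hRTτ]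
    exact inv_mem (mul_mem hH.right_mem_subgroup hH.center_mem_subgroup)
  · rw [hRTv]
    exact hH.center_mem_subgroup
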